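/- If x is a real-valued random variable with E[x] = 0 and E[x^2] < ∞ (and E[x^2] ≠ 0), then Pr(x ≥ 0) ≥ (E|x|)^2 / (4 E[x^2]). -/

import Mathlib

/-!
Since `E x = 0`, the positive part of `x` carries half of `E|x|`, i.e. `E[x; x ≥ 0] = E|x| / 2`,
and Cauchy–Schwarz on the event `{x ≥ 0}` gives `E[x; x ≥ 0]² ≤ P(x ≥ 0) · E[x²]`.
-/

open MeasureTheory

section

variable {Ω : Type*} [MeasurableSpace Ω] {μ : Measure Ω} {f : Ω → ℝ}

theorem integral_abs_eq_two_mul_setIntegral_nonneg (hf : Integrable f μ)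
    (h0 : ∫ ω, f ω ∂μ = 0) :
    ∫ ω, |f ω| ∂μ = 2 * ∫ ω in {ω | 0 ≤ f ω}, f ω ∂μ := by
  have hsplit := integral_add_compl₀
    (aestronglyMeasurable_const.nullMeasurableSet_le hf.1 : NullMeasurableSet {ω | 0 ≤ f ω} μ) hf
  simp only [Set.compl_ofPred, not_le, setIntegral_neg_eq_setIntegral_nonpos hf.1, h0] at hsplit
  have habs := integral_norm_eq_pos_sub_neg hf
  simp only [Real.norm_eq_abs] at habs
  linarith

theorem sq_integral_le_measureReal_univ_mul_integral_sq [IsFiniteMeasure μ]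
    (hf : Integrable f μ) (hf2 : Integrable (fun ω => f ω ^ 2) μ) :
    (∫ ω, f ω ∂μ) ^ 2 ≤ μ.real Set.univ * ∫ ω, f ω ^ 2 ∂μ := by
  rcases eq_zero_or_neZero μ with rfl | hμ
  · simp
  have hjensen : (⨍ ω, f ω ∂μ) ^ 2 ≤ ⨍ ω, f ω ^ 2 ∂μ :=
    even_two.convexOn_pow.map_average_le (continuous_pow 2).continuousOn isClosed_univ
      (.of_forall fun ω => Set.mem_univ _) hf hf2
  have hpos : 0 < μ.real Set.univ := by
    simp [measureReal_def, ENNReal.toReal_pos_iff, measure_lt_top, hμ.out]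
  simp only [average_eq, smul_eq_mul, mul_pow] at hjensen
  rw [inv_pow, ← div_eq_inv_mul, ← div_eq_inv_mul, div_le_div_iff₀ (by positivity) hpos] at hjensen
  nlinarith

end

theorem prob_nonneg_ge_moment_ratio_general
    {Ω : Type*} [MeasurableSpace Ω] (μ : Measure Ω) [IsProbabilityMeasure μ]
    (x : Ω → ℝ) (hx : Integrable x μ)
    (hx2 : Integrable (fun ω => (x ω) ^ 2) μ)
    (hmean : ∫ ω, x ω ∂μ = 0) :
    (∫ ω, |x ω| ∂μ) ^ 2 / (4 * ∫ ω, (x ω) ^ 2 ∂μ)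
      ≤ (μ {ω | 0 ≤ x ω}).toReal := by
  set S := {ω | 0 ≤ x ω}
  have hcs : (∫ ω in S, x ω ∂μ) ^ 2 ≤ μ.real S * ∫ ω in S, x ω ^ 2 ∂μ := by
    simpa [measureReal_restrict_apply_univ] using
      sq_integral_le_measureReal_univ_mul_integral_sq hx.restrict hx2.restrict
  have hrestrict : ∫ ω in S, x ω ^ 2 ∂μ ≤ ∫ ω, x ω ^ 2 ∂μ :=
    setIntegral_le_integral hx2 (.of_forall fun ω => sq_nonneg (x ω))
  refine div_le_of_le_mul₀ (by positivity) measureReal_nonneg ?_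
  rw [integral_abs_eq_two_mul_setIntegral_nonneg hx hmean]
  calc (2 * ∫ ω in S, x ω ∂μ) ^ 2 = 4 * (∫ ω in S, x ω ∂μ) ^ 2 := by ring
    _ ≤ 4 * (μ.real S * ∫ ω, x ω ^ 2 ∂μ) := by gcongr; exact hcs.trans (by gcongr)
    _ = μ.real S * (4 * ∫ ω, x ω ^ 2 ∂μ) := by ring

/-- Paley–Zygmund-type bound: a centered, square-integrable real random variable is
nonnegative with probability at least `(E|x|)² / (4 E[x²])`. -/
theorem prob_nonneg_ge_moment_ratio
    {Ω : Type*} [MeasurableSpace Ω] (μ : Measure Ω) [IsProbabilityMeasure μ]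
    (x : Ω → ℝ) (hx : Integrable x μ)
    (hx2 : Integrable (fun ω => (x ω) ^ 2) μ)
    (hmean : ∫ ω, x ω ∂μ = 0)
    (hne : ∫ ω, (x ω) ^ 2 ∂μ ≠ 0) :
    (∫ ω, |x ω| ∂μ) ^ 2 / (4 * ∫ ω, (x ω) ^ 2 ∂μ)
      ≤ (μ {ω | 0 ≤ x ω}).toReal :=
  prob_nonneg_ge_moment_ratio_general μ x hx hx2 hmean
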